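/- In the game with α = β = 1 and target n = 3, the first player's winning probability is I(p) = 1 − 2p + 5p² − 4p³ + p⁴. -/

import Mathlib

/-!
With one point for tails and two for heads, a player reaches three points after two tosses
unless both of them are tails, and after three tosses otherwise. Ties go to the first player,
so they lose exactly when their first two tosses are tails and those of the second player are
not. With `q = 1 - p`, independence gives this event probability `q ^ 2 - q ^ 4`, and
`1 - q ^ 2 + q ^ 4 = 1 - 2p + 5p² - 4p³ + p⁴`.
-/

open MeasureTheory ProbabilityTheory

/-- Number of tosses for a player to first accumulate at least `n` points, where toss `i`
gives `α + β` points for heads (`X i ω = true`) and `α` points for tails. -/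
noncomputable def hitTime {Ω : Type*} (α β n : ℝ) (X : ℕ → Ω → Bool) (ω : Ω) : ℕ :=
  sInf {k : ℕ | n ≤ α * k + β * ((Finset.range k).filter (fun i => X i ω = true)).card}

section HitTime

variable {Ω : Type*} (X : ℕ → Ω → Bool) (ω : Ω)

lemma hitTime_le_iff {α β n : ℝ} (hα : 0 < α) (hβ : 0 ≤ β) (k : ℕ) :
    hitTime α β n X ω ≤ k ↔
      n ≤ α * k + β * ((Finset.range k).filter (fun i => X i ω = true)).card := by
  set S := {k : ℕ | n ≤ α * k + β * ((Finset.range k).filter (fun i => X i ω = true)).card}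
  have hmono : ∀ ⦃a b : ℕ⦄, a ≤ b → a ∈ S → b ∈ S := by
    intro a b hab ha
    have hcard : (((Finset.range a).filter (fun i => X i ω = true)).card : ℝ) ≤
        ((Finset.range b).filter (fun i => X i ω = true)).card := by
      exact_mod_cast Finset.card_le_card
        (Finset.filter_subset_filter _ (Finset.range_subset_range.2 hab))
    have hab' : (a : ℝ) ≤ b := by exact_mod_cast hab
    simp only [S, Set.mem_ofPred_eq] at ha ⊢
    linarith [mul_le_mul_of_nonneg_left hab' hα.le, mul_le_mul_of_nonneg_left hcard hβ]
  have hne : S.Nonempty := by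
    obtain ⟨k, hk⟩ := exists_nat_ge (n / α)
    refine ⟨k, ?_⟩
    have hβc := mul_nonneg hβ
      (Nat.cast_nonneg (α := ℝ) ((Finset.range k).filter (fun i => X i ω = true)).card)
    simp only [S, Set.mem_ofPred_eq]
    linarith [(div_le_iff₀' hα).1 hk]
  exact ⟨fun h => hmono h (Nat.sInf_mem hne), fun h => Nat.sInf_le h⟩

lemma hitTime_one_one_three : hitTime 1 1 3 X ω = if X 0 ω || X 1 ω then 2 else 3 := by
  have hle (k : ℕ) : hitTime 1 1 3 X ω ≤ k ↔
      3 ≤ k + ∑ i ∈ Finset.range k, if X i ω = true then 1 else 0 := by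
    rw [hitTime_le_iff X ω one_pos zero_le_one, ← Finset.card_filter]
    norm_cast
    simp only [one_mul]
  have hle_one : ¬ hitTime 1 1 3 X ω ≤ 1 := by
    rw [hle]; simp only [Finset.sum_range_succ, Finset.sum_range_zero]
    cases X 0 ω <;> simp
  have hle_two : hitTime 1 1 3 X ω ≤ 2 ↔ (X 0 ω || X 1 ω) := by
    rw [hle]; simp only [Finset.sum_range_succ, Finset.sum_range_zero]
    cases X 0 ω <;> cases X 1 ω <;> simp
  have hle_three : hitTime 1 1 3 X ω ≤ 3 := by
    rw [hle]; simp only [Finset.sum_range_succ, Finset.sum_range_zero]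
    cases X 0 ω <;> cases X 1 ω <;> cases X 2 ω <;> simp
  split_ifs with h
  · have := hle_two.2 h; omega
  · have := mt hle_two.1 h; omega

end HitTime

section Coins

variable {Ω ι : Type*} [MeasurableSpace Ω] {μ : Measure Ω} {p q : ℝ}

lemma measure_eq_false_of_measure_eq_true [IsProbabilityMeasure μ] {f : Ω → Bool}
    (hf : Measurable f) (hp : 0 ≤ p) (htrue : μ {ω | f ω = true} = ENNReal.ofReal p) :
    μ {ω | f ω = false} = ENNReal.ofReal (1 - p) := by
  have hcompl : {ω | f ω = false} = {ω | f ω = true}ᶜ := by ext ω; simp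
  rw [hcompl, prob_compl_eq_one_sub (s := {ω | f ω = true}) (hf (measurableSet_singleton true)),
    htrue, ENNReal.ofReal_sub _ hp, ENNReal.ofReal_one]

lemma ProbabilityTheory.iIndepFun.measure_biInter_eq_false {Z : ι → Ω → Bool}
    (hZ : iIndepFun Z μ) (hq : 0 ≤ q)
    (hfalse : ∀ i, μ {ω | Z i ω = false} = ENNReal.ofReal q) (S : Finset ι) :
    μ (⋂ i ∈ S, {ω | Z i ω = false}) = ENNReal.ofReal (q ^ S.card) := by
  have := hZ.measure_inter_preimage_eq_mul S (fun _ _ => measurableSet_singleton false)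
  simp only [Set.preimage, Set.mem_singleton_iff, hfalse, Finset.prod_const] at this
  rw [this, ENNReal.ofReal_pow hq]

end Coins

theorem stmt_16 {Ω : Type*} [MeasurableSpace Ω] (μ : Measure Ω) [IsProbabilityMeasure μ]
    (p : ℝ) (hp : p ∈ Set.Icc (0 : ℝ) 1)
    (X Y : ℕ → Ω → Bool)
    (hXm : ∀ i, Measurable (X i)) (hYm : ∀ i, Measurable (Y i))
    (hindep : iIndepFun (Sum.elim X Y) μ)
    (hX : ∀ i, μ {ω | X i ω = true} = ENNReal.ofReal p)
    (hY : ∀ i, μ {ω | Y i ω = true} = ENNReal.ofReal p) :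
    μ {ω | hitTime 1 1 3 X ω ≤ hitTime 1 1 3 Y ω} =
      ENNReal.ofReal (1 - 2 * p + 5 * p ^ 2 - 4 * p ^ 3 + p ^ 4) := by
  obtain ⟨hp0, hp1⟩ := hp
  set Z := Sum.elim X Y
  have hZm : ∀ i, Measurable (Z i) := fun i => i.rec hXm hYm
  have hZfalse : ∀ i, μ {ω | Z i ω = false} = ENNReal.ofReal (1 - p) := fun i =>
    measure_eq_false_of_measure_eq_true (hZm i) hp0 (i.rec hX hY)
  let tails (S : Finset (ℕ ⊕ ℕ)) : Set Ω := ⋂ i ∈ S, {ω | Z i ω = false}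
  have htails : ∀ S, MeasurableSet (tails S) := fun S =>
    Finset.measurableSet_biInter S fun i _ => hZm i (measurableSet_singleton false)
  set B := tails {.inl 0, .inl 1}
  set C := tails {.inl 0, .inl 1, .inr 0, .inr 1}
  have hevent : {ω | hitTime 1 1 3 X ω ≤ hitTime 1 1 3 Y ω} = (B \ C)ᶜ := by
    ext ω
    simp only [B, C, tails, Z, Finset.set_biInter_insert, Finset.set_biInter_singleton,
      Sum.elim_inl, Sum.elim_inr, Set.mem_ofPred_eq, Set.mem_compl_iff, Set.mem_sdiff,
      Set.mem_inter_iff, hitTime_one_one_three]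
    cases X 0 ω <;> cases X 1 ω <;> cases Y 0 ω <;> cases Y 1 ω <;> simp
  have hB : μ B = ENNReal.ofReal ((1 - p) ^ 2) :=
    hindep.measure_biInter_eq_false (sub_nonneg.2 hp1) hZfalse _
  have hC : μ C = ENNReal.ofReal ((1 - p) ^ 4) :=
    hindep.measure_biInter_eq_false (sub_nonneg.2 hp1) hZfalse _
  have hCB : C ⊆ B := Set.biInter_subset_biInter_left (by simp [Set.subset_def])
  have hloss : 0 ≤ (1 - p) ^ 2 - (1 - p) ^ 4 :=
    sub_nonneg.2 (pow_le_pow_of_le_one (sub_nonneg.2 hp1) (by linarith) (by norm_num))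
  rw [hevent, prob_compl_eq_one_sub ((htails _).diff (htails _)),
    measure_sdiff hCB (htails _).nullMeasurableSet (measure_ne_top μ C), hB, hC,
    ← ENNReal.ofReal_sub _ (by positivity), ← ENNReal.ofReal_one, ← ENNReal.ofReal_sub _ hloss]
  congr 1
  ring
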